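/- Let γ > 0, let S_i, S_j ∈ ℝ^{n×n} be symmetric with S_i positive definite, and let G ∈ ℝ^{n×n}, A ∈ ℝ^{n×n}, B ∈ ℝ^{n×q}, C ∈ ℝ^{p×n}, D ∈ ℝ^{p×q}. If the block matrix [[G + Gᵀ − S_i, 0, (A G)ᵀ, (C G)ᵀ], [0, γ I_q, Bᵀ, Dᵀ], [A G, B, S_j, 0], [C G, D, 0, γ I_p]] is positive definite, then S_j is positive definite and the block matrix [[Aᵀ S_j^{−1} A + γ^{−1} Cᵀ C − S_i^{−1}, Aᵀ S_j^{−1} B + γ^{−1} Cᵀ D], [Bᵀ S_j^{−1} A + γ^{−1} Dᵀ C, Bᵀ S_j^{−1} B + γ^{−1} Dᵀ D − γ I_q]] is negative definite. -/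

import Mathlib

/-!
Write `M = [[A, B], [C, D]]`, `Z = diag(S_j, γ I)` and `Y = M · diag(G, I)`. The LMI has the shape
`[[diag(G + Gᵀ - S_i, γ I), Yᵀ], [Y, Z]] ≻ 0`, so `Z ≻ 0` and its Schur complement
`diag(G + Gᵀ - S_i, γ I) - Yᵀ Z⁻¹ Y` is positive definite. Since
`Gᵀ S_i⁻¹ G - (G + Gᵀ - S_i) = (G - S_i)ᵀ S_i⁻¹ (G - S_i) ⪰ 0`, the slack block may be replaced by
`Gᵀ S_i⁻¹ G`; this matrix is then positive definite, so `G` is invertible, and the result is the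
congruence of `diag(S_i⁻¹, γ I) - Mᵀ Z⁻¹ M` by the invertible `diag(G, I)`. Hence the latter is
positive definite, which is the claim written out blockwise.
-/

open Matrix
open scoped ComplexOrder

namespace Matrix

section Blocks

variable {m n k l R : Type*}

theorem fromBlocks_sub [Sub R] (A : Matrix m k R) (B : Matrix m l R) (C : Matrix n k R)
    (D : Matrix n l R) (A' : Matrix m k R) (B' : Matrix m l R) (C' : Matrix n k R)
    (D' : Matrix n l R) :
    fromBlocks A B C D - fromBlocks A' B' C' D' =
      fromBlocks (A - A') (B - B') (C - C') (D - D') := by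
  ext (i | i) (j | j) <;> rfl

theorem conjTranspose_fromBlocks_mul_fromBlocks_zero_mul [Fintype m] [Fintype n] [Semiring R]
    [StarRing R] (A : Matrix m k R) (B : Matrix m l R) (C : Matrix n k R) (D : Matrix n l R)
    (P : Matrix m m R) (Q : Matrix n n R) :
    (fromBlocks A B C D)ᴴ * fromBlocks P 0 0 Q * fromBlocks A B C D =
      fromBlocks (Aᴴ * P * A + Cᴴ * Q * C) (Aᴴ * P * B + Cᴴ * Q * D)
        (Bᴴ * P * A + Dᴴ * Q * C) (Bᴴ * P * B + Dᴴ * Q * D) := by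
  simp [fromBlocks_conjTranspose, fromBlocks_multiply, Matrix.mul_assoc]

theorem inv_fromBlocks_zero [Fintype m] [Fintype n] [DecidableEq m] [DecidableEq n] [CommRing R]
    {A : Matrix m m R} {D : Matrix n n R} (hA : IsUnit A) (hD : IsUnit D) :
    (fromBlocks A 0 0 D)⁻¹ = fromBlocks A⁻¹ 0 0 D⁻¹ := by
  simp [inv_fromBlocks_zero₂₁_of_isUnit_iff A 0 D (iff_of_true hA hD)]

theorem inv_smul_one [Fintype n] [DecidableEq n] [Field R] (c : R) :
    (c • (1 : Matrix n n R))⁻¹ = c⁻¹ • 1 := by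
  rcases eq_or_ne c 0 with rfl | hc
  · simp
  · exact inv_eq_left_inv (by simp [smul_smul, mul_inv_cancel₀ hc])

theorem PosDef.toBlocks₁₁ [Ring R] [PartialOrder R] [StarRing R]
    {M : Matrix (m ⊕ n) (m ⊕ n) R} (hM : M.PosDef) : M.toBlocks₁₁.PosDef :=
  hM.submatrix Sum.inl_injective

theorem PosDef.toBlocks₂₂ [Ring R] [PartialOrder R] [StarRing R]
    {M : Matrix (m ⊕ n) (m ⊕ n) R} (hM : M.PosDef) : M.toBlocks₂₂.PosDef :=
  hM.submatrix Sum.inr_injective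

end Blocks

variable {m n k q 𝕜 : Type*} [Fintype m] [Fintype n] [Fintype k] [Fintype q] [RCLike 𝕜]

theorem PosSemidef.fromBlocks_zero₂₂ [DecidableEq m] {E : Matrix m m 𝕜} (hE : E.PosSemidef) :
    (fromBlocks E 0 0 (0 : Matrix n n 𝕜)).PosSemidef := by
  simpa [conjTranspose_fromCols_eq_fromRows_conjTranspose, fromRows_mul, fromRows_mul_fromCols,
    ← fromRows_zero] using hE.conjTranspose_mul_mul_same (fromCols (1 : Matrix m m 𝕜) 0)

theorem PosDef.schurComplement₂₂ [DecidableEq m] [DecidableEq n] {A : Matrix m m 𝕜}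
    {B : Matrix n m 𝕜} {D : Matrix n n 𝕜} (h : (fromBlocks A Bᴴ B D).PosDef) : (A - Bᴴ * D⁻¹ * B).PosDef := by
  have hD : D.PosDef := by simpa using h.toBlocks₂₂
  have := hD.isUnit.invertible
  have hdet : (fromBlocks A Bᴴ B D).det ≠ 0 := ((isUnit_iff_isUnit_det _).mp h.isUnit).ne_zero
  rw [det_fromBlocks₂₂, invOf_eq_nonsing_inv] at hdet
  have hsemi := (PosDef.fromBlocks₂₂ A Bᴴ hD).mp (by simpa using h.posSemidef)
  rw [conjTranspose_conjTranspose] at hsemi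
  exact hsemi.posDef_iff_det_ne_zero.mpr (right_ne_zero_of_mul hdet)

theorem PosDef.posSemidef_conjTranspose_mul_inv_mul_sub [DecidableEq m] {S : Matrix m m 𝕜}
    (hS : S.PosDef) (G : Matrix m m 𝕜) : (Gᴴ * S⁻¹ * G - (G + Gᴴ - S)).PosSemidef := by
  have := hS.isUnit.invertible
  convert hS.inv.posSemidef.conjTranspose_mul_mul_same (G - S) using 1
  simp only [conjTranspose_sub, hS.isHermitian.eq, sub_mul, mul_sub, Matrix.mul_assoc,
    ← invOf_eq_nonsing_inv, invOf_mul_self, mul_invOf_cancel_left, Matrix.mul_one]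
  abel

theorem PosDef.fromBlocks_inv_sub_of_slack [DecidableEq m] [DecidableEq q] [DecidableEq k]
    {S G : Matrix m m 𝕜} (hS : S.PosDef) {R : Matrix q q 𝕜} {M : Matrix k (m ⊕ q) 𝕜}
    {Z : Matrix k k 𝕜}
    (h : (fromBlocks (fromBlocks (G + Gᴴ - S) 0 0 R) (M * fromBlocks G 0 0 (1 : Matrix q q 𝕜))ᴴ
      (M * fromBlocks G 0 0 (1 : Matrix q q 𝕜)) Z).PosDef) :
    (fromBlocks S⁻¹ 0 0 R - Mᴴ * Z⁻¹ * M).PosDef := by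
  set Gd : Matrix (m ⊕ q) (m ⊕ q) 𝕜 := fromBlocks G 0 0 1
  have hslack := hS.posSemidef_conjTranspose_mul_inv_mul_sub G
  have hGSG : (Gᴴ * S⁻¹ * G).PosDef := by
    simpa using h.toBlocks₁₁.toBlocks₁₁.add_posSemidef hslack
  have hGd : IsUnit Gd := by
    simpa [Gd] using isUnit_of_mul_isUnit_right hGSG.isUnit
  have hdiag : Gdᴴ * fromBlocks S⁻¹ 0 0 R * Gd =
      fromBlocks (G + Gᴴ - S) 0 0 R + fromBlocks (Gᴴ * S⁻¹ * G - (G + Gᴴ - S)) 0 0 0 := by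
    rw [conjTranspose_fromBlocks_mul_fromBlocks_zero_mul, fromBlocks_add]
    simp
  refine hGd.posDef_star_left_conjugate_iff.mp ?_
  rw [star_eq_conjTranspose, Matrix.mul_sub, Matrix.sub_mul, hdiag, add_sub_right_comm]
  simpa [conjTranspose_mul, Matrix.mul_assoc] using
    h.schurComplement₂₂.add_posSemidef hslack.fromBlocks_zero₂₂

end Matrix

theorem stmt11_general
    (n q p : ℕ) (γ : ℝ)
    (Si Sj : Matrix (Fin n) (Fin n) ℝ)
    (hSipd : Si.PosDef)
    (G A : Matrix (Fin n) (Fin n) ℝ) (B : Matrix (Fin n) (Fin q) ℝ)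
    (C : Matrix (Fin p) (Fin n) ℝ) (D : Matrix (Fin p) (Fin q) ℝ)
    (hLMI : (Matrix.fromBlocks
        (Matrix.fromBlocks (G + Gᵀ - Si) 0 0 (γ • (1 : Matrix (Fin q) (Fin q) ℝ)))
        (Matrix.fromBlocks (A * G)ᵀ (C * G)ᵀ Bᵀ Dᵀ)
        (Matrix.fromBlocks (A * G) B (C * G) D)
        (Matrix.fromBlocks Sj 0 0 (γ • (1 : Matrix (Fin p) (Fin p) ℝ)))).PosDef) :
    Sj.PosDef ∧
    (-(Matrix.fromBlocks
        (Aᵀ * Sj⁻¹ * A + γ⁻¹ • (Cᵀ * C) - Si⁻¹)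
        (Aᵀ * Sj⁻¹ * B + γ⁻¹ • (Cᵀ * D))
        (Bᵀ * Sj⁻¹ * A + γ⁻¹ • (Dᵀ * C))
        (Bᵀ * Sj⁻¹ * B + γ⁻¹ • (Dᵀ * D) - γ • (1 : Matrix (Fin q) (Fin q) ℝ)))).PosDef := by
  set M := fromBlocks A B C D
  set Z := fromBlocks Sj 0 0 (γ • (1 : Matrix (Fin p) (Fin p) ℝ))
  have hLMI' : (fromBlocks (fromBlocks (G + Gᴴ - Si) 0 0 (γ • 1))
      (M * fromBlocks G 0 0 (1 : Matrix (Fin q) (Fin q) ℝ))ᴴ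
      (M * fromBlocks G 0 0 (1 : Matrix (Fin q) (Fin q) ℝ)) Z).PosDef := by
    convert hLMI using 2 <;> simp [M, fromBlocks_multiply, fromBlocks_transpose]
  have hZ : Z.PosDef := by simpa using hLMI'.toBlocks₂₂
  have hSj : Sj.PosDef := by simpa [Z] using hZ.toBlocks₁₁
  have hγI : (γ • (1 : Matrix (Fin p) (Fin p) ℝ)).PosDef := by simpa [Z] using hZ.toBlocks₂₂
  have hMZM : Mᴴ * Z⁻¹ * M = fromBlocks (Aᵀ * Sj⁻¹ * A + γ⁻¹ • (Cᵀ * C))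
      (Aᵀ * Sj⁻¹ * B + γ⁻¹ • (Cᵀ * D)) (Bᵀ * Sj⁻¹ * A + γ⁻¹ • (Dᵀ * C))
      (Bᵀ * Sj⁻¹ * B + γ⁻¹ • (Dᵀ * D)) := by
    rw [inv_fromBlocks_zero hSj.isUnit hγI.isUnit, inv_smul_one,
      conjTranspose_fromBlocks_mul_fromBlocks_zero_mul]
    simp
  have hdissip : (fromBlocks Si⁻¹ 0 0 (γ • 1) - Mᴴ * Z⁻¹ * M).PosDef :=
    hSipd.fromBlocks_inv_sub_of_slack hLMI'
  rw [hMZM, fromBlocks_sub] at hdissip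
  refine ⟨hSj, ?_⟩
  convert hdissip using 1
  rw [fromBlocks_neg]
  congr 1 <;> abel

/-- the slack-variable LMI implies the dissipation inequality in the
Lyapunov variables S_i⁻¹, S_j⁻¹ (negative definiteness of a matrix M is expressed
as positive definiteness of −M). -/
theorem stmt11
    (n q p : ℕ) (γ : ℝ) (hγ : 0 < γ)
    (Si Sj : Matrix (Fin n) (Fin n) ℝ)
    (hSi : Si.IsSymm) (hSj : Sj.IsSymm) (hSipd : Si.PosDef)
    (G A : Matrix (Fin n) (Fin n) ℝ) (B : Matrix (Fin n) (Fin q) ℝ)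
    (C : Matrix (Fin p) (Fin n) ℝ) (D : Matrix (Fin p) (Fin q) ℝ)
    (hLMI : (Matrix.fromBlocks
        (Matrix.fromBlocks (G + Gᵀ - Si) 0 0 (γ • (1 : Matrix (Fin q) (Fin q) ℝ)))
        (Matrix.fromBlocks (A * G)ᵀ (C * G)ᵀ Bᵀ Dᵀ)
        (Matrix.fromBlocks (A * G) B (C * G) D)
        (Matrix.fromBlocks Sj 0 0 (γ • (1 : Matrix (Fin p) (Fin p) ℝ)))).PosDef) :
    Sj.PosDef ∧
    (-(Matrix.fromBlocks
        (Aᵀ * Sj⁻¹ * A + γ⁻¹ • (Cᵀ * C) - Si⁻¹)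
        (Aᵀ * Sj⁻¹ * B + γ⁻¹ • (Cᵀ * D))
        (Bᵀ * Sj⁻¹ * A + γ⁻¹ • (Dᵀ * C))
        (Bᵀ * Sj⁻¹ * B + γ⁻¹ • (Dᵀ * D) - γ • (1 : Matrix (Fin q) (Fin q) ℝ)))).PosDef :=
  stmt11_general n q p γ Si Sj hSipd G A B C D hLMI
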